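/- Let a < b be reals, 𝓘 = [a,b], let h : 𝓘 → ℝ^ϰ be measurable with square-integrable components and 𝔥 = ∫_𝓘 h hᵀ dτ positive definite, and let R ∈ ℝ^{n×n} be symmetric positive definite. Then for every square-integrable x : 𝓘 → ℝ^n, ∫_𝓘 x(τ)ᵀ R x(τ) dτ ≥ vᵀ (𝔥⁻¹ ⊗ R) v, where v = ∫_𝓘 (h(τ) ⊗ I_n) x(τ) dτ ∈ ℝ^{ϰn}. -/

import Mathlib

open MeasureTheory Matrix Classical
open scoped Kronecker

/-- The Kronecker product `g ⊗ I_n` of a column vector `g ∈ ℝ^κ`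
(indexed by `κI`) with the `n × n` identity matrix. -/
noncomputable def vecKronId {κI : Type*} (g : κI → ℝ) (n : ℕ) :
    Matrix (κI × Fin n) (Fin n) ℝ :=
  fun ki j => g ki.1 * (1 : Matrix (Fin n) (Fin n) ℝ) ki.2 j

/-- The entrywise (cross-)Gram integral `∫_{[a,b]} ϕ(τ) h(τ)ᵀ dτ`. -/
noncomputable def gramOn {μI ϰI : Type*} (a b : ℝ) (ϕ : ℝ → μI → ℝ) (h : ℝ → ϰI → ℝ) :
    Matrix μI ϰI ℝ :=
  fun i j => ∫ τ in Set.Icc a b, ϕ τ i * h τ j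

/-- The positive semidefinite square root `√X` of a positive semidefinite
real matrix (junk value `0` if `X` is not positive semidefinite). -/
noncomputable def psdSqrt {m : Type*} [Fintype m] [DecidableEq m] (X : Matrix m m ℝ) :
    Matrix m m ℝ :=
  if hX : X.PosSemidef then (hX.1.eigenvectorUnitary : Matrix m m ℝ) *
    diagonal (fun i => Real.sqrt (hX.1.eigenvalues i)) * star (hX.1.eigenvectorUnitary : Matrix m m ℝ)
    else 0

/-!
Stack `x` and `h` into one family in `L²`. Its Gram matrix `[[Gₓₓ, Gₓₕ], [Gₕₓ, 𝔥]]` is positive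
semidefinite, hence so is the Schur complement `S = Gₓₓ - Gₓₕ 𝔥⁻¹ Gₕₓ`. Since `v = vec Gₓₕ`, the two
sides of the inequality are `tr (R Gₓₓ)` and `tr (R Gₓₕ 𝔥⁻¹ Gₕₓ)`, and their difference `tr (R S)`
is nonnegative because the trace of a product of positive semidefinite matrices is.
-/

section IntegralGram

variable {α ι κ : Type*} [MeasurableSpace α]

noncomputable def integralGram (μ : Measure α) (f : α → ι → ℝ) (g : α → κ → ℝ) :
    Matrix ι κ ℝ :=
  of fun i j => ∫ a, f a i * g a j ∂μ

variable {μ : Measure α}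

lemma integralGram_transpose (f : α → ι → ℝ) (g : α → κ → ℝ) :
    (integralGram μ f g)ᵀ = integralGram μ g f := by
  ext i j
  simp only [integralGram, transpose_apply, of_apply, mul_comm]

lemma integralGram_sumElim (f : α → ι → ℝ) (g : α → κ → ℝ) :
    integralGram μ (fun a => Sum.elim (f a) (g a)) (fun a => Sum.elim (f a) (g a)) =
      fromBlocks (integralGram μ f f) (integralGram μ f g)
        (integralGram μ g f) (integralGram μ g g) := by
  ext (i | i) (j | j) <;> rfl

lemma posSemidef_integralGram [Fintype ι] {f : α → ι → ℝ}
    (hf : ∀ i, MemLp (fun a => f a i) 2 μ) : (integralGram μ f f).PosSemidef := by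
  have hgram : integralGram μ f f = gram ℝ fun i => (hf i).toLp := by
    ext i j
    rw [gram_apply, L2.inner_def, integralGram, of_apply]
    refine integral_congr_ae ?_
    filter_upwards [(hf i).coeFn_toLp, (hf j).coeFn_toLp] with a hi hj
    simp [hi, hj, mul_comm]
  rw [hgram]
  exact posSemidef_gram ℝ _

lemma posSemidef_integralGram_sub_mul_inv_mul [Fintype ι] [Fintype κ] [DecidableEq κ]
    {f : α → ι → ℝ} {g : α → κ → ℝ}
    (hf : ∀ i, MemLp (fun a => f a i) 2 μ) (hg : ∀ k, MemLp (fun a => g a k) 2 μ)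
    (hgg : (integralGram μ g g).PosDef) :
    (integralGram μ f f - integralGram μ f g * (integralGram μ g g)⁻¹ *
      integralGram μ g f).PosSemidef := by
  have := hgg.isUnit.invertible
  have hblock := posSemidef_integralGram (μ := μ) (f := fun a => Sum.elim (f a) (g a))
    (Sum.rec hf hg)
  rw [integralGram_sumElim, ← integralGram_transpose f g,
    ← conjTranspose_eq_transpose_of_trivial] at hblock
  rw [← integralGram_transpose f g, ← conjTranspose_eq_transpose_of_trivial]
  exact (PosDef.fromBlocks₂₂ _ _ hgg).mp hblock

lemma integral_dotProduct_mulVec [Fintype ι] [Fintype κ] {f : α → ι → ℝ} {g : α → κ → ℝ}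
    (hfg : ∀ i j, Integrable (fun a => f a i * g a j) μ) (A : Matrix ι κ ℝ) :
    ∫ a, f a ⬝ᵥ (A *ᵥ g a) ∂μ = (A * integralGram μ g f).trace := by
  have hexpand : ∀ a, f a ⬝ᵥ (A *ᵥ g a) = ∑ i, ∑ j, A i j * (f a i * g a j) := fun a => by
    simp only [dotProduct, mulVec, Finset.mul_sum]
    exact Finset.sum_congr rfl fun i _ => Finset.sum_congr rfl fun j _ => by ring
  simp_rw [hexpand]
  rw [integral_finsetSum]
  · refine Finset.sum_congr rfl fun i _ => ?_
    rw [integral_finsetSum]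
    · refine Finset.sum_congr rfl fun j _ => ?_
      simp only [integral_const_mul, integralGram, of_apply, mul_comm (g _ j)]
    · exact fun j _ => (hfg i j).const_mul _
  · exact fun i _ => integrable_finsetSum _ fun j _ => (hfg i j).const_mul _

end IntegralGram

open scoped ComplexOrder in
lemma Matrix.PosSemidef.trace_mul_nonneg {n 𝕜 : Type*} [Fintype n] [RCLike 𝕜]
    {A B : Matrix n n 𝕜} (hA : A.PosSemidef) (hB : B.PosSemidef) : 0 ≤ (A * B).trace := by
  obtain ⟨m, v, rfl⟩ := posSemidef_iff_eq_sum_vecMulVec.mp hA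
  rw [Finset.sum_mul, trace_sum]
  refine Finset.sum_nonneg fun i _ => ?_
  rw [vecMulVec_mul, trace_vecMulVec, dotProduct_comm, ← dotProduct_mulVec]
  exact hB.dotProduct_mulVec_nonneg (v i)

lemma Matrix.vec_dotProduct_kronecker_mulVec_vec {m n R : Type*} [Fintype m] [Fintype n]
    [CommSemiring R] (X : Matrix m n R) (P : Matrix n n R) (A : Matrix m m R) :
    vec X ⬝ᵥ ((P ⊗ₖ A) *ᵥ vec X) = (A * (X * Pᵀ * Xᵀ)).trace := by
  rw [kronecker_mulVec_vec, vec_dotProduct_vec, trace_mul_comm]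
  simp only [Matrix.mul_assoc]

lemma vecKronId_mulVec {κI : Type*} [Fintype κI] (g : κI → ℝ) {n : ℕ} (y : Fin n → ℝ) :
    vecKronId g n *ᵥ y = vec (vecMulVec y g) := by
  ext ⟨k, j⟩
  simp [vecKronId, mulVec, dotProduct, one_apply, vec, vecMulVec, mul_comm]

theorem leastSquares_integral_inequality_general
    (ϰ n : ℕ) (a b : ℝ)
    (h : ℝ → Fin ϰ → ℝ)
    (hhL2 : ∀ i, MemLp (fun τ => h τ i) 2 (volume.restrict (Set.Icc a b)))
    (𝔥 : Matrix (Fin ϰ) (Fin ϰ) ℝ) (h𝔥 : 𝔥 = gramOn a b h h) (h𝔥pd : 𝔥.PosDef)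
    (R : Matrix (Fin n) (Fin n) ℝ) (hR : R.PosDef)
    (x : ℝ → Fin n → ℝ)
    (hxL2 : ∀ i, MemLp (fun τ => x τ i) 2 (volume.restrict (Set.Icc a b)))
    (v : Fin ϰ × Fin n → ℝ)
    (hv : v = fun j => ∫ τ in Set.Icc a b, (vecKronId (h τ) n *ᵥ x τ) j) :
    v ⬝ᵥ ((𝔥⁻¹ ⊗ₖ R) *ᵥ v) ≤ ∫ τ in Set.Icc a b, x τ ⬝ᵥ (R *ᵥ x τ) := by
  set μ := volume.restrict (Set.Icc a b)
  -- `gramOn a b` is `integralGram` for the restricted Lebesgue measure, definitionally.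
  obtain rfl : 𝔥 = integralGram μ h h := h𝔥
  have hv : v = vec (integralGram μ x h) := by
    simp only [hv, vecKronId_mulVec]
    rfl
  have hquad : ∫ τ, x τ ⬝ᵥ (R *ᵥ x τ) ∂μ = (R * integralGram μ x x).trace :=
    integral_dotProduct_mulVec (fun i j => (hxL2 i).integrable_mul (hxL2 j)) R
  rw [hv, vec_dotProduct_kronecker_mulVec_vec, hquad, ← sub_nonneg, ← trace_sub, ← Matrix.mul_sub,
    transpose_nonsing_inv, integralGram_transpose, integralGram_transpose]
  exact hR.posSemidef.trace_mul_nonneg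
    (posSemidef_integralGram_sub_mul_inv_mul hxL2 hhL2 h𝔥pd)

/-- **Bessel-type least-squares integral inequality.**
For `𝔥 = ∫ h hᵀ ≻ 0` and `R ≻ 0`:
`∫ x(τ)ᵀ R x(τ) dτ ≥ vᵀ (𝔥⁻¹ ⊗ R) v` where `v = ∫ (h(τ) ⊗ Iₙ) x(τ) dτ`. -/
theorem leastSquares_integral_inequality
    (ϰ n : ℕ) (a b : ℝ) (hab : a < b)
    (h : ℝ → Fin ϰ → ℝ)
    (hhmeas : ∀ i, Measurable fun τ => h τ i)
    (hhL2 : ∀ i, MemLp (fun τ => h τ i) 2 (volume.restrict (Set.Icc a b)))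
    (𝔥 : Matrix (Fin ϰ) (Fin ϰ) ℝ) (h𝔥 : 𝔥 = gramOn a b h h) (h𝔥pd : 𝔥.PosDef)
    (R : Matrix (Fin n) (Fin n) ℝ) (hR : R.PosDef)
    (x : ℝ → Fin n → ℝ)
    (hxmeas : ∀ i, Measurable fun τ => x τ i)
    (hxL2 : ∀ i, MemLp (fun τ => x τ i) 2 (volume.restrict (Set.Icc a b)))
    (v : Fin ϰ × Fin n → ℝ)
    (hv : v = fun j => ∫ τ in Set.Icc a b, (vecKronId (h τ) n *ᵥ x τ) j) :
    v ⬝ᵥ ((𝔥⁻¹ ⊗ₖ R) *ᵥ v) ≤ ∫ τ in Set.Icc a b, x τ ⬝ᵥ (R *ᵥ x τ) :=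
  leastSquares_integral_inequality_general ϰ n a b h hhL2 𝔥 h𝔥 h𝔥pd R hR x hxL2 v hv
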